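/- arXiv:2111.07862 — 2 statements merged into one kernel-verified Lean document; each statement's English description precedes it below -/
import Mathlib

section
/- Let n ≥ 1 and k ≥ 1 be odd integers and set m = (n+k)/2. For every family of integers λ_{a,b}, indexed by pairs of natural numbers (a,b) with a + b ≤ m, there exists a polynomial P ∈ ℤ[t] involving only odd powers of t and of degree at most n, such that for every integer c the identity Σ_{a+b ≤ m} λ_{a,b} · y^{2a} · x^{2b} · (y + c·x)^{2(m−a−b)} = P(c) · x^n · y^k holds in the ring R(n,k,c). -/
/-!
In `R(n,k,c)` we have `x ^ (n + 1) = 0` and `y ^ (k + 1) = -c x y ^ k`, so a monomial `x ^ i * y ^ j`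
of total degree `n + k` reduces to `(-c) ^ (j - k) • x ^ n * y ^ k` when `k ≤ j` and to `0` otherwise.
Expanding `(y + c x) ^ e` by the binomial theorem, every monomial of `y ^ a * x ^ b * (y + c x) ^ e`
(with `a + b + e = n + k`) therefore contributes an integer multiple of `c ^ (a + e - k) = c ^ (n - b)`,
and `n - b` is odd and at most `n` when `n` is odd and `b` is even.
-/

open MvPolynomial

noncomputable section

/-- The ideal `(X^{n+1}, Y^{k+1} + c·X·Y^k)` in `ℤ[X,Y]`. -/
def relIdeal (n k : ℕ) (c : ℤ) : Ideal (MvPolynomial (Fin 2) ℤ) :=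
  Ideal.span {(X 0 : MvPolynomial (Fin 2) ℤ) ^ (n + 1),
    (X 1 : MvPolynomial (Fin 2) ℤ) ^ (k + 1) + C c * X 0 * (X 1 : MvPolynomial (Fin 2) ℤ) ^ k}

/-- The ring `R(n,k,c) = ℤ[X,Y]/(X^{n+1}, Y^{k+1} + c·X·Y^k)`. -/
abbrev R (n k : ℕ) (c : ℤ) := MvPolynomial (Fin 2) ℤ ⧸ relIdeal n k c

/-- The image `x` of `X` in `R(n,k,c)`. -/
def x (n k : ℕ) (c : ℤ) : R n k c := Ideal.Quotient.mk (relIdeal n k c) (X 0)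

/-- The image `y` of `Y` in `R(n,k,c)`. -/
def y (n k : ℕ) (c : ℤ) : R n k c := Ideal.Quotient.mk (relIdeal n k c) (X 1)

open scoped Polynomial

namespace Polynomial

def supportedIn (R : Type*) [Semiring R] (s : Set ℕ) : Submodule R R[X] where
  carrier := {p | ∀ i, p.coeff i ≠ 0 → i ∈ s}
  zero_mem' i h := absurd (coeff_zero i) h
  add_mem' {p q} hp hq i h := by
    rw [coeff_add] at h
    by_cases hpi : p.coeff i = 0
    · exact hq i (by simpa [hpi] using h)
    · exact hp i hpi
  smul_mem' r p hp i h := by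
    rw [coeff_smul, smul_eq_mul] at h
    exact hp i (right_ne_zero_of_mul h)

theorem C_mul_X_pow_mem_supportedIn {R : Type*} [Semiring R] {s : Set ℕ} (r : R) {i : ℕ}
    (hi : i ∈ s) : C r * X ^ i ∈ supportedIn R s := by
  intro j hj
  rw [coeff_C_mul_X_pow] at hj
  split_ifs at hj with h
  · exact h ▸ hi
  · exact absurd rfl hj

theorem natDegree_le_of_mem_supportedIn {R : Type*} [Semiring R] {s : Set ℕ} {p : R[X]} {n : ℕ}
    (hp : p ∈ supportedIn R s) (hs : ∀ i ∈ s, i ≤ n) : p.natDegree ≤ n :=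
  natDegree_le_iff_coeff_eq_zero.2 fun i hi => by_contra fun h => (hs i (hp i h)).not_gt hi

end Polynomial

def monomialCoeff (k j : ℕ) : ℤ[X] :=
  if k ≤ j then Polynomial.C ((-1) ^ (j - k)) * Polynomial.X ^ (j - k) else 0

def termCoeff (k a e : ℕ) : ℤ[X] :=
  ∑ j ∈ Finset.range (e + 1),
    Polynomial.C (e.choose j : ℤ) * Polynomial.X ^ (e - j) * monomialCoeff k (a + j)

theorem termCoeff_mem_supportedIn {n k a b e : ℕ} (hn : Odd n) (hb : Even b)
    (habe : a + b + e = n + k) :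
    termCoeff k a e ∈ Polynomial.supportedIn ℤ {i | Odd i ∧ i ≤ n} := by
  refine Submodule.sum_mem _ fun j hj => ?_
  rw [Finset.mem_range] at hj
  unfold monomialCoeff
  split_ifs with hk
  · have hdeg : e - j + (a + j - k) = n - b := by omega
    have hodd : Odd (n - b) := Nat.Odd.sub_even (by omega) hn hb
    convert Polynomial.C_mul_X_pow_mem_supportedIn ((e.choose j : ℤ) * (-1) ^ (a + j - k))
      (s := {i | Odd i ∧ i ≤ n}) ⟨hodd, Nat.sub_le n b⟩ using 1
    rw [← hdeg, pow_add, Polynomial.C_mul]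
    ring
  · rw [mul_zero]
    exact Submodule.zero_mem _

section Reduction

variable {A : Type*} [CommRing A] {n k : ℕ} {c : ℤ} {x y : A}

theorem pow_mul_pow_add_eq (hy : y ^ (k + 1) = -(c • (x * y ^ k))) (i r : ℕ) :
    x ^ i * y ^ (k + r) = (-c) ^ r • (x ^ (i + r) * y ^ k) := by
  induction r generalizing i with
  | zero => simp
  | succ r ih =>
    calc x ^ i * y ^ (k + (r + 1)) = y ^ r * (x ^ i * y ^ (k + 1)) := by ring
      _ = -c • (x ^ (i + 1) * y ^ (k + r)) := by
        rw [hy, zsmul_eq_mul, zsmul_eq_mul]; push_cast; ring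
      _ = (-c) ^ (r + 1) • (x ^ (i + (r + 1)) * y ^ k) := by
        rw [ih, smul_smul, pow_succ', Nat.add_right_comm, Nat.add_assoc]

theorem pow_mul_pow_eq_eval_monomialCoeff_smul (hx : x ^ (n + 1) = 0)
    (hy : y ^ (k + 1) = -(c • (x * y ^ k))) {i j : ℕ} (hij : i + j = n + k) :
    x ^ i * y ^ j = (monomialCoeff k j).eval c • (x ^ n * y ^ k) := by
  unfold monomialCoeff
  split_ifs with hkj
  · obtain ⟨r, rfl⟩ := Nat.exists_eq_add_of_le hkj
    rw [pow_mul_pow_add_eq hy, Nat.add_sub_cancel_left, show i + r = n by omega]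
    rw [neg_pow, Polynomial.eval_mul, Polynomial.eval_C, Polynomial.eval_pow, Polynomial.eval_X]
  · rw [Polynomial.eval_zero, zero_smul, pow_eq_zero_of_le (by omega : n + 1 ≤ i) hx, zero_mul]

theorem pow_mul_pow_mul_add_smul_pow_eq (hx : x ^ (n + 1) = 0)
    (hy : y ^ (k + 1) = -(c • (x * y ^ k))) {a b e : ℕ} (habe : a + b + e = n + k) :
    y ^ a * x ^ b * (y + c • x) ^ e = (termCoeff k a e).eval c • (x ^ n * y ^ k) := by
  rw [add_pow, Finset.mul_sum, termCoeff, Polynomial.eval_finsetSum, Finset.sum_smul]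
  refine Finset.sum_congr rfl fun j hj => ?_
  rw [Finset.mem_range] at hj
  calc y ^ a * x ^ b * (y ^ j * (c • x) ^ (e - j) * (e.choose j))
      = ((e.choose j : ℤ) * c ^ (e - j)) • (x ^ (b + (e - j)) * y ^ (a + j)) := by
        rw [smul_pow, zsmul_eq_mul, zsmul_eq_mul]; push_cast; ring
    _ = _ := by
        rw [pow_mul_pow_eq_eval_monomialCoeff_smul hx hy (by omega), smul_smul]
        simp [mul_assoc]

end Reduction

theorem x_pow_succ (n k : ℕ) (c : ℤ) : x n k c ^ (n + 1) = 0 := by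
  rw [x, ← map_pow, Ideal.Quotient.eq_zero_iff_mem]
  exact Ideal.subset_span (Set.mem_insert _ _)

theorem y_pow_succ (n k : ℕ) (c : ℤ) :
    y n k c ^ (k + 1) = -(c • (x n k c * y n k c ^ k)) := by
  have hrel : Ideal.Quotient.mk (relIdeal n k c) (X 1 ^ (k + 1) + C c * X 0 * X 1 ^ k) = 0 :=
    Ideal.Quotient.eq_zero_iff_mem.2 (Ideal.subset_span (Set.mem_insert_of_mem _ rfl))
  rw [eq_neg_iff_add_eq_zero, ← hrel, x, y]
  simp only [map_add, map_mul, map_pow, MvPolynomial.hom_C, zsmul_eq_mul, mul_assoc]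

theorem stmt4_general (n k m : ℕ) (hno : Odd n)
    (hm : n + k = 2 * m) (lam : ℕ × ℕ → ℤ) :
    ∃ P : Polynomial ℤ, (∀ i : ℕ, P.coeff i ≠ 0 → Odd i) ∧ P.natDegree ≤ n ∧
      ∀ c : ℤ,
        ∑ p ∈ (Finset.range (m + 1) ×ˢ Finset.range (m + 1)).filter
            (fun p => p.1 + p.2 ≤ m),
          lam p • (y n k c ^ (2 * p.1) * x n k c ^ (2 * p.2) *
            (y n k c + c • x n k c) ^ (2 * (m - p.1 - p.2)))
          = P.eval c • (x n k c ^ n * y n k c ^ k) := by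
  set S := (Finset.range (m + 1) ×ˢ Finset.range (m + 1)).filter (fun p => p.1 + p.2 ≤ m)
  have hS {p : ℕ × ℕ} (hp : p ∈ S) : 2 * p.1 + 2 * p.2 + 2 * (m - p.1 - p.2) = n + k := by
    have hle := (Finset.mem_filter.mp hp).2
    omega
  set P := ∑ p ∈ S, lam p • termCoeff k (2 * p.1) (2 * (m - p.1 - p.2))
  have hP : P ∈ Polynomial.supportedIn ℤ {i | Odd i ∧ i ≤ n} :=
    Submodule.sum_mem _ fun p hp =>
      Submodule.smul_mem _ _ (termCoeff_mem_supportedIn hno (even_two_mul p.2) (hS hp))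
  refine ⟨P, fun i hi => (hP i hi).1,
    Polynomial.natDegree_le_of_mem_supportedIn hP fun i hi => hi.2, fun c => ?_⟩
  rw [Polynomial.eval_finsetSum, Finset.sum_smul]
  refine Finset.sum_congr rfl fun p hp => ?_
  rw [Polynomial.eval_smul, smul_eq_mul, mul_smul,
    ← pow_mul_pow_mul_add_smul_pow_eq (x_pow_succ n k c) (y_pow_succ n k c) (hS hp)]

/-- Let `n, k ≥ 1` be odd with `n + k = 2m`. For every family of integers `λ_{a,b}`
indexed by pairs `(a,b)` with `a + b ≤ m`, there is a polynomial `P ∈ ℤ[t]` involving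
only odd powers of `t` and of degree at most `n` such that for every integer `c`,
`Σ_{a+b≤m} λ_{a,b}·y^{2a}·x^{2b}·(y + c·x)^{2(m-a-b)} = P(c)·x^n·y^k` in `R(n,k,c)`. -/
theorem stmt4 (n k m : ℕ) (hn : 1 ≤ n) (hk : 1 ≤ k) (hno : Odd n) (hko : Odd k)
    (hm : n + k = 2 * m) (lam : ℕ × ℕ → ℤ) :
    ∃ P : Polynomial ℤ, (∀ i : ℕ, P.coeff i ≠ 0 → Odd i) ∧ P.natDegree ≤ n ∧
      ∀ c : ℤ,
        ∑ p ∈ (Finset.range (m + 1) ×ˢ Finset.range (m + 1)).filter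
            (fun p => p.1 + p.2 ≤ m),
          lam p • (y n k c ^ (2 * p.1) * x n k c ^ (2 * p.2) *
            (y n k c + c • x n k c) ^ (2 * (m - p.1 - p.2)))
          = P.eval c • (x n k c ^ n * y n k c ^ k) :=
  stmt4_general n k m hno hm lam
end
end

section
/- Let n ≥ 3 and k ≥ 3 be odd integers and c a nonzero integer. Then the element k · y^{n+k} + (n+1) · x^{n+k} + (y + c·x)^{n+k} is nonzero in the ring R(n,k,c). -/
open MvPolynomial

noncomputable section

/-!
Modulo the relations every monomial of degree `n + k` is a multiple of the top monomial
`x^n y^k`: `x^a y^(n+k-a) = (-c)^(n-a) x^n y^k` for `a ≤ n`, and `0` for `a > n`. Reading off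
that multiple is a `ℤ`-linear functional on `ℤ[X,Y]` that kills the ideal. On the given element
it equals `(-c)^n k + c^n binom(n+k-1, n)`, the second term by an alternating binomial sum; for
odd `n` this is `c^n (binom(n+k-1, n) - k)`, which is nonzero since `binom(n+k-1, n) > k`.
-/

open Finset

lemma eq_single_add_single_iff {s : Fin 2 →₀ ℕ} {a b : ℕ} :
    s = Finsupp.single 0 a + Finsupp.single 1 b ↔ s 0 = a ∧ s 1 = b := by
  simp [Finsupp.ext_iff, Fin.forall_fin_two]

def topCoeff (n k : ℕ) (c : ℤ) : MvPolynomial (Fin 2) ℤ →ₗ[ℤ] ℤ :=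
  ∑ a ∈ range (n + 1),
    (-c) ^ (n - a) • lcoeff ℤ (Finsupp.single 0 a + Finsupp.single 1 (n + k - a))

lemma topCoeff_monomial (n k : ℕ) (c : ℤ) (s : Fin 2 →₀ ℕ) (r : ℤ) :
    topCoeff n k c (monomial s r) =
      if s 0 ≤ n ∧ s 0 + s 1 = n + k then (-c) ^ (n - s 0) * r else 0 := by
  simp only [topCoeff, LinearMap.sum_apply, LinearMap.smul_apply, lcoeff_apply, coeff_monomial,
    eq_single_add_single_iff, smul_eq_mul, mul_ite, mul_zero]
  split_ifs with h
  · rw [Finset.sum_eq_single_of_mem (s 0) (mem_range.2 (by omega)), if_pos ⟨rfl, by omega⟩]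
    exact fun a _ ha => if_neg fun h' => ha h'.1.symm
  · exact Finset.sum_eq_zero fun a ha => if_neg fun h' => h (by have := mem_range.1 ha; omega)

lemma topCoeff_mul_X_zero_pow (n k : ℕ) (c : ℤ) (q : MvPolynomial (Fin 2) ℤ) :
    topCoeff n k c (q * X 0 ^ (n + 1)) = 0 := by
  induction q using MvPolynomial.induction_on' with
  | monomial s r =>
    rw [X_pow_eq_monomial, monomial_mul, topCoeff_monomial, if_neg]
    simp only [Finsupp.add_apply, Finsupp.single_eq_same]
    omega
  | add p q hp hq => rw [add_mul, map_add, hp, hq, add_zero]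

lemma topCoeff_mul_relation (n k : ℕ) (c : ℤ) (q : MvPolynomial (Fin 2) ℤ) :
    topCoeff n k c (q * (X 1 ^ (k + 1) + C c * X 0 * X 1 ^ k)) = 0 := by
  induction q using MvPolynomial.induction_on' with
  | monomial s r =>
    have hrel : (X 1 ^ (k + 1) + C c * X 0 * X 1 ^ k : MvPolynomial (Fin 2) ℤ) =
        monomial (Finsupp.single 1 (k + 1)) 1 +
          monomial (Finsupp.single 0 1 + Finsupp.single 1 k) c := by
      rw [X_pow_eq_monomial, X_pow_eq_monomial, X, C_mul_monomial, monomial_mul]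
      simp
    rw [hrel, mul_add, monomial_mul, monomial_mul, map_add, topCoeff_monomial, topCoeff_monomial]
    simp only [Finsupp.add_apply, Finsupp.single_eq_same, ne_eq, zero_ne_one, one_ne_zero,
      not_false_eq_true, Finsupp.single_eq_of_ne, add_zero, zero_add, mul_one]
    split_ifs <;> try omega
    rw [show n - s 0 = n - (s 0 + 1) + 1 by omega]
    ring
  | add p q hp hq => rw [add_mul, map_add, hp, hq, add_zero]

lemma topCoeff_eq_zero_of_mem {n k : ℕ} {c : ℤ} {p : MvPolynomial (Fin 2) ℤ}
    (hp : p ∈ relIdeal n k c) : topCoeff n k c p = 0 := by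
  obtain ⟨u, v, rfl⟩ := Ideal.mem_span_pair.1 hp
  rw [map_add, topCoeff_mul_X_zero_pow, topCoeff_mul_relation, add_zero]

lemma sum_range_neg_one_pow_sub_mul_choose (N m : ℕ) :
    ∑ a ∈ range (m + 1), (-1 : ℤ) ^ (m - a) * ((N + 1).choose a : ℤ) = N.choose m := by
  have hsign : ∀ a ∈ range (m + 1), (-1 : ℤ) ^ (m - a) = (-1) ^ m * (-1) ^ a := by
    intro a ha
    obtain ⟨d, rfl⟩ := Nat.exists_eq_add_of_le (Nat.le_of_lt_succ (mem_range.1 ha))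
    rw [Nat.add_sub_cancel_left, pow_add, mul_comm ((-1 : ℤ) ^ a), mul_assoc, ← pow_add,
      ← two_mul, pow_mul, neg_one_sq, one_pow, mul_one]
  rw [sum_congr rfl fun a ha => by rw [hsign a ha, mul_assoc], ← mul_sum,
    Int.alternating_sum_range_choose_eq_choose, ← mul_assoc, ← pow_add, ← two_mul, pow_mul,
    neg_one_sq, one_pow, one_mul]

lemma lt_choose_add_sub_one {n k : ℕ} (hn : 2 ≤ n) (hk : 2 ≤ k) :
    k < (n + k - 1).choose n := by
  obtain ⟨n, rfl⟩ := Nat.exists_eq_add_of_le' hn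
  obtain ⟨k, rfl⟩ := Nat.exists_eq_add_of_le' hk
  have hchoose : 0 < (k + 2).choose 2 := Nat.choose_pos (by omega)
  calc k + 2 < (k + 2).choose 1 + (k + 2).choose 2 := by simpa using hchoose
    _ = (k + 1 + 2).choose (k + 1) := by rw [Nat.choose_symm_add, ← Nat.choose_succ_succ]
    _ ≤ (k + 1 + (n + 2)).choose (k + 1) := Nat.choose_le_choose _ (by omega)
    _ = (n + 2 + (k + 2) - 1).choose (n + 2) := by
      rw [Nat.choose_symm_add]; congr 1; omega

def sPoly (n k : ℕ) (c : ℤ) : MvPolynomial (Fin 2) ℤ :=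
  C (k : ℤ) * X 1 ^ (n + k) + C ((n : ℤ) + 1) * X 0 ^ (n + k) + (C c * X 0 + X 1) ^ (n + k)

lemma mk_sPoly (n k : ℕ) (c : ℤ) :
    Ideal.Quotient.mk (relIdeal n k c) (sPoly n k c) =
      (k : ℤ) • y n k c ^ (n + k) + ((n : ℤ) + 1) • x n k c ^ (n + k)
        + (y n k c + c • x n k c) ^ (n + k) := by
  have hC (a : ℤ) : Ideal.Quotient.mk (relIdeal n k c) (C a) = a :=
    eq_intCast ((Ideal.Quotient.mk (relIdeal n k c)).comp C) a
  simp only [sPoly, x, y, map_add, map_mul, map_pow, hC, zsmul_eq_mul]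
  push_cast
  ring

lemma topCoeff_binomial_pow {n k : ℕ} (c : ℤ) (hk : 0 < k) :
    topCoeff n k c ((C c * X 0 + X 1) ^ (n + k)) = c ^ n * (n + k - 1).choose n := by
  have hterm (a : ℕ) :
      (C c * X 0) ^ a * X 1 ^ (n + k - a) * ((n + k).choose a : MvPolynomial (Fin 2) ℤ) =
        monomial (Finsupp.single 0 a + Finsupp.single 1 (n + k - a))
          (c ^ a * (n + k).choose a) := by
    rw [monomial_single_add, ← C_mul_X_pow_eq_monomial, map_mul, map_pow, map_natCast]
    ring
  rw [add_pow, map_sum, show n + k + 1 = n + 1 + k by omega, sum_range_add]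
  simp only [hterm, topCoeff_monomial, Finsupp.add_apply, Finsupp.single_eq_same, ne_eq,
    zero_ne_one, one_ne_zero, not_false_eq_true, Finsupp.single_eq_of_ne, add_zero, zero_add]
  rw [sum_congr rfl fun a ha => if_pos (by have := mem_range.1 ha; omega),
    sum_eq_zero fun a _ => if_neg (by omega), add_zero]
  have hsign : ∀ a ∈ range (n + 1), (-c) ^ (n - a) * (c ^ a * ((n + k).choose a : ℤ)) =
      c ^ n * ((-1) ^ (n - a) * (n + k).choose a) := by
    intro a ha
    rw [neg_pow, ← pow_sub_mul_pow c (Nat.le_of_lt_succ (mem_range.1 ha))]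
    ring
  have halt := sum_range_neg_one_pow_sub_mul_choose (n + k - 1) n
  rw [Nat.sub_add_cancel (by omega)] at halt
  rw [sum_congr rfl hsign, ← mul_sum, halt]

lemma topCoeff_sPoly {n k : ℕ} (c : ℤ) (hk : 0 < k) :
    topCoeff n k c (sPoly n k c) = (-c) ^ n * k + c ^ n * (n + k - 1).choose n := by
  rw [sPoly, map_add, map_add, topCoeff_binomial_pow c hk, C_mul_X_pow_eq_monomial,
    C_mul_X_pow_eq_monomial, topCoeff_monomial, topCoeff_monomial, if_pos (by simp),
    if_neg (by rw [Finsupp.single_eq_same]; omega)]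
  simp

theorem stmt8_general (n k : ℕ) (hn : 3 ≤ n) (hk : 3 ≤ k) (hno : Odd n)
    (c : ℤ) (hc : c ≠ 0) :
    (k : ℤ) • y n k c ^ (n + k) + ((n : ℤ) + 1) • x n k c ^ (n + k)
        + (y n k c + c • x n k c) ^ (n + k) ≠ 0 := by
  rw [← mk_sPoly, Ne, Ideal.Quotient.eq_zero_iff_mem]
  intro hmem
  have hzero := topCoeff_eq_zero_of_mem hmem
  rw [topCoeff_sPoly c (by omega), hno.neg_pow] at hzero
  have hfactor : c ^ n * (((n + k - 1).choose n : ℤ) - k) = 0 := by linear_combination hzero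
  have hlt : k < (n + k - 1).choose n := lt_choose_add_sub_one (by omega) (by omega)
  rcases mul_eq_zero.1 hfactor with h | h
  · exact pow_ne_zero n hc h
  · omega

/-- Let `n, k ≥ 3` be odd and `c` a nonzero integer. Then the element
`k·y^{n+k} + (n+1)·x^{n+k} + (y + c·x)^{n+k}` is nonzero in `R(n,k,c)`. -/
theorem stmt8 (n k : ℕ) (hn : 3 ≤ n) (hk : 3 ≤ k) (hno : Odd n) (hko : Odd k)
    (c : ℤ) (hc : c ≠ 0) :
    (k : ℤ) • y n k c ^ (n + k) + ((n : ℤ) + 1) • x n k c ^ (n + k)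
        + (y n k c + c • x n k c) ^ (n + k) ≠ 0 :=
  stmt8_general n k hn hk hno c hc
end
end
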